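/- arXiv:2202.04984 — 2 statements merged into one kernel-verified Lean document; each statement's English description precedes it below -/
import Mathlib

section
/- Let A be a finitely generated commutative ℂ-algebra which is an integral domain. Let M be an A-module for which there exists a ℂ-subalgebra B ⊆ A isomorphic to a polynomial ring ℂ[X₁,…,X_d] over ℂ, such that A is a finitely generated B-module and M, via restriction of scalars, is a finitely generated free B-module. Let m ∈ M, and suppose there is a set S of maximal ideals of A whose corresponding set of points is Zariski-dense in the prime spectrum Spec(A), such that m ∈ 𝔪·M for every 𝔪 ∈ S (i.e., the image of m in the fiber M ⊗_A A/𝔪 vanishes for every 𝔪 ∈ S). Then m = 0. -/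
/-!
Over `B` the module `M` is free, hence torsion-free, and since `A` is an integral domain integral
over `B`, every nonzero `a : A` divides a nonzero element of `B`; so `M` is torsion-free over `A`.
A nonzero element `m` of a finitely generated torsion-free module over a domain is detected by
an `A`-linear form `f : M → A` (take a linear form over the fraction field and clear
denominators). If `m ∈ 𝔪 • M` then `f m ∈ 𝔪`, so `f m` lies in every prime of a dense subset of
`Spec A`; it therefore lies in the nilradical, which is zero.
-/

open Module

lemma Module.IsTorsionFree.of_isIntegral (B : Type*) {A M : Type*} [CommRing B] [IsDomain B]
    [CommRing A] [IsDomain A] [Algebra B A] [Algebra.IsIntegral B A]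
    [AddCommGroup M] [Module A M] [Module B M] [IsScalarTower B A M] [IsTorsionFree B M] :
    IsTorsionFree A M := by
  refine .of_smul_eq_zero fun a x hax => or_iff_not_imp_left.mpr fun ha => ?_
  obtain ⟨b, hb, hb0⟩ := Submodule.exists_mem_ne_zero_of_ne_bot <|
    Ideal.comap_ne_bot_of_integral_mem ha (Ideal.mem_span_singleton_self a)
      (Algebra.IsIntegral.isIntegral (R := B) a)
  obtain ⟨c, hc⟩ := Ideal.mem_span_singleton'.mp hb
  have hbx : b • x = 0 := by
    rw [← algebraMap_smul A b x, ← hc, mul_smul, hax, smul_zero]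
  exact (smul_eq_zero.mp hbx).resolve_left hb0

lemma LinearMap.exists_algebraMap_comp_eq_smul {A : Type*} (K : Type*) {M : Type*} [CommRing A]
    [CommRing K] [Algebra A K] [IsFractionRing A K] [AddCommGroup M] [Module A M]
    [Module.Finite A M] (χ : M →ₗ[A] K) :
    ∃ a ∈ nonZeroDivisors A, ∃ f : M →ₗ[A] A, Algebra.linearMap A K ∘ₗ f = a • χ := by
  obtain ⟨a, ha, hint⟩ := FractionalIdeal.isFractional_of_fg (S := nonZeroDivisors A)
    (Module.Finite.fg_top.map χ)
  have hχ : ∀ x, a • χ x ∈ LinearMap.range (Algebra.linearMap A K) := fun x =>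
    hint _ (Submodule.mem_map_of_mem Submodule.mem_top)
  let j := LinearEquiv.ofInjective (Algebra.linearMap A K) (IsFractionRing.injective A K)
  refine ⟨a, ha, j.symm ∘ₗ (a • χ).codRestrict _ hχ, LinearMap.ext fun x => ?_⟩
  exact congrArg Subtype.val (j.apply_symm_apply ((a • χ).codRestrict _ hχ x))

lemma exists_linearMap_apply_ne_zero (A : Type*) {M : Type*} [CommRing A] [IsDomain A]
    [AddCommGroup M] [Module A M] [Module.Finite A M] [IsTorsionFree A M] {m : M} (hm : m ≠ 0) :
    ∃ f : M →ₗ[A] A, f m ≠ 0 := by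
  let K := FractionRing A
  let ι := LocalizedModule.mkLinearMap (nonZeroDivisors A) M
  have hι : Function.Injective ι :=
    (IsLocalizedModule.injective_iff_isRegular (nonZeroDivisors A) ι).mpr fun c =>
      (IsRegular.of_ne_zero (nonZeroDivisors.ne_zero c.2)).isSMulRegular
  obtain ⟨φ, hφ⟩ := Projective.exists_dual_ne_zero K ((map_ne_zero_iff ι hι).mpr hm)
  obtain ⟨a, ha, f, hf⟩ := (φ.restrictScalars A ∘ₗ ι).exists_algebraMap_comp_eq_smul K
  refine ⟨f, fun hfm => hφ ?_⟩
  have haφ : a • φ (ι m) = 0 := by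
    simpa using (LinearMap.congr_fun hf m).symm.trans (congrArg (algebraMap A K) hfm)
  exact (smul_eq_zero.mp haφ).resolve_left (nonZeroDivisors.ne_zero ha)

lemma LinearMap.apply_mem_of_mem_smul_top {R M : Type*} [CommRing R] [AddCommGroup M]
    [Module R M] (f : M →ₗ[R] R) {I : Ideal R} {m : M} (hm : m ∈ I • (⊤ : Submodule R M)) :
    f m ∈ I := by
  simpa using Submodule.smul_top_le_comap_smul_top I f hm

lemma PrimeSpectrum.eq_zero_of_dense_of_forall_mem {R : Type*} [CommRing R] [IsReduced R]
    {s : Set (PrimeSpectrum R)} (hs : Dense s) {c : R} (hc : ∀ p ∈ s, c ∈ p.asIdeal) :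
    c = 0 := by
  by_contra hc0
  have hne : (basicOpen c : Set (PrimeSpectrum R)).Nonempty := by
    rw [Set.nonempty_iff_ne_empty, Ne, TopologicalSpace.Opens.coe_eq_empty,
      basicOpen_eq_bot_iff]
    exact fun h => hc0 h.eq_zero
  obtain ⟨p, hps, hpc⟩ := hs.exists_mem_open (basicOpen c).isOpen hne
  exact (mem_basicOpen c p).mp hpc (hc p hps)

theorem element_of_CM_module_vanishing_on_dense_set_is_zero_general
    (A : Type*) [CommRing A] [IsDomain A] [Algebra ℂ A]
    (M : Type*) [AddCommGroup M] [Module A M]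
    (B : Subalgebra ℂ A)
    (hAfin : Module.Finite B A) (hMfin : Module.Finite B M) (hMfree : Module.Free B M)
    (m : M) (S : Set (Ideal A))
    (hdense : Dense {p : PrimeSpectrum A | p.asIdeal ∈ S})
    (hvanish : ∀ 𝔪 ∈ S, m ∈ 𝔪 • (⊤ : Submodule A M)) :
    m = 0 := by
  have : Module.Finite A M := .of_restrictScalars_finite B A M
  have : Algebra.IsIntegral B A := .of_finite B A
  have : IsTorsionFree A M := .of_isIntegral B
  by_contra hm
  obtain ⟨f, hf⟩ := exists_linearMap_apply_ne_zero A hm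
  exact hf <| PrimeSpectrum.eq_zero_of_dense_of_forall_mem hdense fun p hp =>
    f.apply_mem_of_mem_smul_top (hvanish _ hp)

/-- **Corollary 5.5**: Let `A` be a finitely generated commutative `ℂ`-algebra which is a
domain, and let `M` be an `A`-module that is Cohen–Macaulay of full dimension in the sense of
[BBG97, Criterion 2.5]: there is a `ℂ`-subalgebra `B ⊆ A` isomorphic to a polynomial ring
`ℂ[X₁,…,X_d]` such that `A` is a finitely generated `B`-module and `M` is a finitely generated
free `B`-module. If an element `m : M` vanishes in the fiber `M ⊗_A A/𝔪` for every maximal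
ideal `𝔪` in a set `S` whose corresponding set of points is Zariski-dense in `Spec A`,
then `m = 0`. -/
theorem element_of_CM_module_vanishing_on_dense_set_is_zero
    (A : Type*) [CommRing A] [IsDomain A] [Algebra ℂ A]
    (hfg : Algebra.FiniteType ℂ A)
    (M : Type*) [AddCommGroup M] [Module A M]
    (B : Subalgebra ℂ A) (d : ℕ) (e : B ≃ₐ[ℂ] MvPolynomial (Fin d) ℂ)
    (hAfin : Module.Finite B A) (hMfin : Module.Finite B M) (hMfree : Module.Free B M)
    (m : M) (S : Set (Ideal A)) (hS : ∀ 𝔪 ∈ S, 𝔪.IsMaximal)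
    (hdense : Dense {p : PrimeSpectrum A | p.asIdeal ∈ S})
    (hvanish : ∀ 𝔪 ∈ S, m ∈ 𝔪 • (⊤ : Submodule A M)) :
    m = 0 :=
  element_of_CM_module_vanishing_on_dense_set_is_zero_general A M B hAfin hMfin hMfree m S hdense
    hvanish
end

section
/- Let L be a group and U ≤ L a subgroup which is locally finite, i.e., every finite subset of U is contained in a finite subgroup of U. Let ψ : U → ℂˣ be a group homomorphism (a character of U). For a module M over the group algebra ℂ[L] (the monoid algebra of L over ℂ), define the (U,ψ)-coinvariants M_{U,ψ} as the quotient of M by the ℂ-linear span of the set { u•m − ψ(u)·m : u ∈ U, m ∈ M }. Then the functor M ↦ M_{U,ψ} from ℂ[L]-modules to ℂ-vector spaces is exact; in particular, for every injective ℂ[L]-linear map f : N → M, the induced ℂ-linear map N_{U,ψ} → M_{U,ψ} is injective. -/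
/-!
For a finite subgroup `V` with character `χ`, the element `e = |V|⁻¹ ∑ χ(v)⁻¹ v` of `ℂ[L]`
satisfies `e v = χ(v) e`, so it kills every generator `v m - χ(v) m`, while `m - e m` is a
combination of such generators. Hence the `(V, χ)`-coinvariants kernel of any module is the
kernel of `e`, and injective module maps reflect it. For locally finite `U`, an element of the
`(U, ψ)`-kernel involves only finitely many `u`, so it already lies in the `(V, ψ|_V)`-kernel of
some finite `V ≤ U`.
-/

open MonoidAlgebra

/-- For a module `M` over the group algebra `ℂ[L]`, the `(U,ψ)`-coinvariants submodule:
the `ℂ`-linear span of the elements `u • m - ψ(u) • m` for `u ∈ U`, `m ∈ M`.  The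
`(U,ψ)`-coinvariants `M_{U,ψ}` is the quotient of `M` by this submodule. -/
def coinvariantsKer {L : Type*} [Group L] (U : Subgroup L) (ψ : U →* ℂˣ)
    (M : Type*) [AddCommGroup M] [Module (MonoidAlgebra ℂ L) M]
    [Module ℂ M] [IsScalarTower ℂ (MonoidAlgebra ℂ L) M] : Submodule ℂ M :=
  Submodule.span ℂ
    {x : M | ∃ (u : U) (m : M), x = MonoidAlgebra.of ℂ L (u : L) • m - (ψ u : ℂ) • m}

section CharAverage

variable {k L : Type*} [Field k] [Group L] (V : Subgroup L) [Fintype V] (χ : V →* kˣ)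

noncomputable def charAverage : MonoidAlgebra k L :=
  (Fintype.card V : k)⁻¹ • ∑ v : V, (↑(χ v)⁻¹ : k) • of k L v

theorem charAverage_mul_of (w : V) :
    charAverage V χ * of k L w = (χ w : k) • charAverage V χ := by
  have hterm : ∀ v : V, (↑(χ v)⁻¹ : k) • (of k L v * of k L w) =
      (χ w : k) • ((↑(χ (v * w))⁻¹ : k) • of k L ↑(v * w)) := by
    intro v
    have hscalar : (↑(χ v)⁻¹ : k) = χ w * ↑(χ (v * w))⁻¹ := by
      rw [map_mul, mul_inv_rev, Units.val_mul, ← mul_assoc, Units.mul_inv, one_mul]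
    rw [hscalar, mul_smul, ← map_mul, Subgroup.coe_mul]
  simp only [charAverage, smul_mul_assoc, Finset.sum_mul, hterm, ← Finset.smul_sum]
  rw [smul_comm]
  congr 2
  exact Fintype.sum_equiv (Equiv.mulRight w) _ _ fun _ => rfl

variable {P : Type*} [AddCommGroup P] [Module (MonoidAlgebra k L) P] [Module k P]
  [IsScalarTower k (MonoidAlgebra k L) P]

theorem charAverage_smul_sub_smul (v : V) (m : P) :
    charAverage V χ • (of k L v • m - (χ v : k) • m) = 0 := by
  rw [smul_sub, ← mul_smul, charAverage_mul_of, smul_assoc, smul_comm, sub_self]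

theorem sub_charAverage_smul [CharZero k] (m : P) :
    m - charAverage V χ • m =
      (Fintype.card V : k)⁻¹ • ∑ v : V, -(↑(χ v)⁻¹ : k) • (of k L v • m - (χ v : k) • m) := by
  have hcard : (Fintype.card V : k) ≠ 0 := Nat.cast_ne_zero.mpr Fintype.card_ne_zero
  have hterm : ∀ v : V, -(↑(χ v)⁻¹ : k) • (of k L v • m - (χ v : k) • m) =
      m - (↑(χ v)⁻¹ : k) • of k L v • m := by
    intro v
    rw [neg_smul, smul_sub, smul_smul, Units.inv_mul, one_smul, neg_sub]
  simp only [hterm, Finset.sum_sub_distrib, Finset.sum_const, Finset.card_univ, smul_sub,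
    ← Nat.cast_smul_eq_nsmul k, smul_smul, inv_mul_cancel₀ hcard, one_smul, charAverage,
    Finset.sum_smul, smul_assoc]

end CharAverage

section Coinvariants

variable {L : Type*} [Group L] {M : Type*} [AddCommGroup M] [Module (MonoidAlgebra ℂ L) M]
  [Module ℂ M] [IsScalarTower ℂ (MonoidAlgebra ℂ L) M]

theorem coinvariantsKer_comp_inclusion_le {U V : Subgroup L} (hVU : V ≤ U) (ψ : U →* ℂˣ) :
    coinvariantsKer V (ψ.comp (Subgroup.inclusion hVU)) M ≤ coinvariantsKer U ψ M :=
  Submodule.span_mono <| by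
    rintro _ ⟨v, m, rfl⟩
    exact ⟨Subgroup.inclusion hVU v, m, rfl⟩

theorem mem_coinvariantsKer_iff_charAverage_smul_eq_zero (V : Subgroup L) [Fintype V]
    (χ : V →* ℂˣ) (m : M) : m ∈ coinvariantsKer V χ M ↔ charAverage V χ • m = 0 := by
  constructor
  · intro hm
    have hker : coinvariantsKer V χ M ≤
        LinearMap.ker (DistribSMul.toLinearMap ℂ M (charAverage V χ)) := by
      refine Submodule.span_le.mpr ?_
      rintro _ ⟨v, m, rfl⟩
      exact charAverage_smul_sub_smul V χ v m
    exact hker hm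
  · intro hm
    have hsub := sub_charAverage_smul V χ m
    rw [hm, sub_zero] at hsub
    rw [hsub]
    exact Submodule.smul_mem _ _ <| Submodule.sum_mem _ fun v _ =>
      Submodule.smul_mem _ _ <| Submodule.subset_span ⟨v, m, rfl⟩

theorem exists_finite_subgroup_mem_coinvariantsKer {U : Subgroup L}
    (hU : ∀ s : Finset L, ↑s ⊆ (U : Set L) →
      ∃ V : Subgroup L, V ≤ U ∧ (V : Set L).Finite ∧ ↑s ⊆ (V : Set L))
    {ψ : U →* ℂˣ} {x : M} (hx : x ∈ coinvariantsKer U ψ M) :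
    ∃ (V : Subgroup L) (hVU : V ≤ U), Finite V ∧
      x ∈ coinvariantsKer V (ψ.comp (Subgroup.inclusion hVU)) M := by
  classical
  obtain ⟨ι, c, g, rfl⟩ := (Submodule.mem_span_set' (R := ℂ)).mp hx
  choose u m hum using fun i => (g i).2
  obtain ⟨V, hVU, hVfin, huV⟩ := hU (Finset.univ.image fun i => (u i : L)) <| by
    simp only [Finset.coe_image, Finset.coe_univ, Set.image_univ]
    rintro _ ⟨i, rfl⟩
    exact (u i).2
  have hu : ∀ i, (u i : L) ∈ V := fun i => huV (by simp)
  refine ⟨V, hVU, hVfin.to_subtype, Submodule.sum_mem _ fun i _ => Submodule.smul_mem _ _ ?_⟩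
  rw [hum i]
  exact Submodule.subset_span ⟨⟨u i, hu i⟩, m i, rfl⟩

end Coinvariants

/-- **Proposition 4.1** (discrete setting): Let `L` be a group and `U ≤ L` a locally finite
subgroup (every finite subset of `U` is contained in a finite subgroup of `U`), and let
`ψ : U → ℂˣ` be a character.  Then the `(U,ψ)`-coinvariants functor `M ↦ M_{U,ψ}` is exact;
in particular, for every injective `ℂ[L]`-linear map `f : N → M` the induced `ℂ`-linear map
`N_{U,ψ} → M_{U,ψ}` is injective, i.e. any `n : N` with `f n` in the coinvariants kernel of
`M` already lies in the coinvariants kernel of `N`.  (Equivalently, `ind_U^L(ψ)` is a flat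
`ℂ[L]`-module.) -/
theorem coinvariants_functor_exact
    {L : Type*} [Group L] (U : Subgroup L)
    (hU : ∀ s : Finset L, ↑s ⊆ (U : Set L) →
      ∃ V : Subgroup L, V ≤ U ∧ (V : Set L).Finite ∧ ↑s ⊆ (V : Set L))
    (ψ : U →* ℂˣ)
    (M N : Type*) [AddCommGroup M] [Module (MonoidAlgebra ℂ L) M]
    [AddCommGroup N] [Module (MonoidAlgebra ℂ L) N]
    [Module ℂ M] [IsScalarTower ℂ (MonoidAlgebra ℂ L) M]
    [Module ℂ N] [IsScalarTower ℂ (MonoidAlgebra ℂ L) N]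
    (f : N →ₗ[MonoidAlgebra ℂ L] M) (hf : Function.Injective f) :
    ∀ n : N, f n ∈ coinvariantsKer U ψ M → n ∈ coinvariantsKer U ψ N := by
  intro n hn
  obtain ⟨V, hVU, hVfin, hfnV⟩ := exists_finite_subgroup_mem_coinvariantsKer hU hn
  have : Fintype V := Fintype.ofFinite V
  refine coinvariantsKer_comp_inclusion_le hVU ψ ?_
  rw [mem_coinvariantsKer_iff_charAverage_smul_eq_zero] at hfnV ⊢
  exact hf (by rw [map_smul, hfnV, map_zero])
end
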